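/- Suppose t_i ≤ −2 for all i = 1,…,k−2. Then the matrix A(0,0,−t₁,…,−t_{k−2}) = A(−t₁,…,−t_{k−2})·[[0,1],[−1,0]]·[[0,1],[−1,0]] equals [[−p_{k−2}, −q_{k−2}],[p_{k−3}, q_{k−3}]], and its trace −p_{k−2} + q_{k−3} is strictly negative (hence not equal to 2), where p_j, q_j satisfy p_j = −t_j p_{j−1} − p_{j−2}, q_j = −t_j q_{j−1} − q_{j−2}, p₀ = 1, p_{−1} = 0, q₀ = 0, q_{−1} = −1. -/
import Mathlib


open Matrix

/-- `Amat [u₁, …, u_m]` is the matrix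
`A(−u₁,…,−u_m) = [[−u_m,1],[−1,0]] ⋯ [[−u₁,1],[−1,0]]`. -/
def Amat (l : List ℤ) : Matrix (Fin 2) (Fin 2) ℤ :=
  ((l.map fun t => (!![-t, 1; -1, 0] : Matrix (Fin 2) (Fin 2) ℤ)).reverse).prod

lemma Amat_cons (a : ℤ) (l : List ℤ) : Amat (a :: l) = Amat l * !![-a, 1; -1, 0] := by
  simp [Amat]

lemma Amat_concat (a : ℤ) (l : List ℤ) : Amat (l ++ [a]) = !![-a, 1; -1, 0] * Amat l := by
  simp [Amat]

/-- If `t_i ≤ −2` for `i = 1,…,k−2`, then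
`A(0,0,−t₁,…,−t_{k−2}) = A(−t₁,…,−t_{k−2})·[[0,1],[−1,0]]·[[0,1],[−1,0]]`
equals `[[−p_{k−2}, −q_{k−2}],[p_{k−3}, q_{k−3}]]` and its trace
`−p_{k−2} + q_{k−3}` is strictly negative, hence not equal to `2`. -/
theorem stmt4 (k : ℕ) (hk : 3 ≤ k) (t p q : ℤ → ℤ)
    (ht : ∀ j : ℤ, 1 ≤ j → j ≤ (k : ℤ) - 2 → t j ≤ -2)
    (hp0 : p 0 = 1) (hpm : p (-1) = 0) (hq0 : q 0 = 0) (hqm : q (-1) = -1)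
    (hprec : ∀ j : ℤ, 1 ≤ j → j ≤ (k : ℤ) - 2 → p j = -(t j) * p (j - 1) - p (j - 2))
    (hqrec : ∀ j : ℤ, 1 ≤ j → j ≤ (k : ℤ) - 2 → q j = -(t j) * q (j - 1) - q (j - 2)) :
    Amat ((0 : ℤ) :: (0 : ℤ) :: (List.range (k - 2)).map fun i => t ((i : ℤ) + 1)) =
      Amat ((List.range (k - 2)).map fun i => t ((i : ℤ) + 1)) *
        !![0, 1; -1, 0] * !![0, 1; -1, 0] ∧
    Amat ((0 : ℤ) :: (0 : ℤ) :: (List.range (k - 2)).map fun i => t ((i : ℤ) + 1)) =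
      !![-(p ((k : ℤ) - 2)), -(q ((k : ℤ) - 2)); p ((k : ℤ) - 3), q ((k : ℤ) - 3)] ∧
    (Amat ((0 : ℤ) :: (0 : ℤ) :: (List.range (k - 2)).map fun i => t ((i : ℤ) + 1))).trace
      < 0 ∧
    (Amat ((0 : ℤ) :: (0 : ℤ) :: (List.range (k - 2)).map fun i => t ((i : ℤ) + 1))).trace
      ≠ 2 := by
  have hlist : ∀ m : ℕ, ((List.range m).map fun i => t ((i : ℤ) + 1)) =
      (List.range m).map (fun i : ℕ => t ((i : ℤ) + 1)) := by
    intro m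
    induction m with
    | zero => simp
    | succ n ih => rw [List.range_succ]; simp_all
  rw [hlist]
  set l : List ℤ := (List.range (k - 2)).map (fun i : ℕ => t ((i : ℤ) + 1)) with hl
  -- first conjunct
  have hzero : (!![-(0 : ℤ), 1; -1, 0]) = !![0, 1; -1, 0] := by norm_num
  have h1 : Amat ((0 : ℤ) :: (0 : ℤ) :: l) = Amat l * !![0, 1; -1, 0] * !![0, 1; -1, 0] := by
    rw [Amat_cons, Amat_cons, hzero]
  -- the value of `Amat` on partial lists
  have key : ∀ m : ℕ, (m : ℤ) ≤ (k : ℤ) - 2 →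
      Amat ((List.range m).map (fun i : ℕ => t ((i : ℤ) + 1))) =
        !![p m, q m; -p ((m : ℤ) - 1), -q ((m : ℤ) - 1)] := by
    intro m
    induction m with
    | zero =>
        intro _
        simp only [List.range_zero, List.map_nil, Nat.cast_zero]
        norm_num [Amat, hp0, hq0, hpm, hqm]
        exact (Matrix.one_fin_two).trans (by norm_num)
    | succ n ih =>
        intro hle
        have hn : (n : ℤ) ≤ (k : ℤ) - 2 := by push_cast at hle ⊢; omega
        have h1n : 1 ≤ (n : ℤ) + 1 := by omega
        have hn1 : (n : ℤ) + 1 ≤ (k : ℤ) - 2 := by push_cast at hle; omega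
        have hrec := hprec ((n : ℤ) + 1) h1n hn1
        have hrecq := hqrec ((n : ℤ) + 1) h1n hn1
        rw [List.range_succ, List.map_append]
        simp only [List.map_cons, List.map_nil]
        rw [Amat_concat, ih hn]
        have : ((n : ℤ) + 1) - 1 = (n : ℤ) := by ring
        have h2 : ((n : ℤ) + 1) - 2 = (n : ℤ) - 1 := by ring
        rw [Matrix.mul_fin_two]
        push_cast
        rw [hrec, hrecq, this, h2]
        congr 1 <;> ring_nf
  have hk2 : ((k - 2 : ℕ) : ℤ) = (k : ℤ) - 2 := by
    have : 2 ≤ k := by omega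
    push_cast [this]; ring
  have hAl : Amat l = !![p ((k : ℤ) - 2), q ((k : ℤ) - 2);
      -p ((k : ℤ) - 3), -q ((k : ℤ) - 3)] := by
    have := key (k - 2) (le_of_eq hk2)
    rw [hl, this, hk2]
    have : (k : ℤ) - 2 - 1 = (k : ℤ) - 3 := by ring
    rw [this]
  -- second conjunct
  have h2 : Amat ((0 : ℤ) :: (0 : ℤ) :: l) =
      !![-(p ((k : ℤ) - 2)), -(q ((k : ℤ) - 2)); p ((k : ℤ) - 3), q ((k : ℤ) - 3)] := by
    rw [h1, hAl, Matrix.mul_fin_two, Matrix.mul_fin_two]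
    congr 1 <;> ring
  -- positivity invariant
  have inv : ∀ n : ℕ, (n : ℤ) ≤ (k : ℤ) - 2 →
      p n ≥ p ((n : ℤ) - 1) + 1 ∧ p ((n : ℤ) - 1) ≥ 0 ∧
      q n ≥ q ((n : ℤ) - 1) ∧ q n ≥ 0 ∧
      p n - q n ≥ p ((n : ℤ) - 1) - q ((n : ℤ) - 1) ∧ p n - q n ≥ 1 := by
    intro n
    induction n with
    | zero =>
        intro _
        norm_num [hp0, hq0, hpm, hqm]
    | succ n ih =>
        intro hle
        have hn : (n : ℤ) ≤ (k : ℤ) - 2 := by push_cast at hle ⊢; omega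
        obtain ⟨i1, i2, i3, i4, i5, i6⟩ := ih hn
        have h1n : 1 ≤ (n : ℤ) + 1 := by omega
        have hn1 : (n : ℤ) + 1 ≤ (k : ℤ) - 2 := by push_cast at hle; omega
        have hrec := hprec ((n : ℤ) + 1) h1n hn1
        have hrecq := hqrec ((n : ℤ) + 1) h1n hn1
        have hts := ht ((n : ℤ) + 1) h1n hn1
        have e1 : ((n : ℤ) + 1) - 1 = (n : ℤ) := by ring
        have e2 : ((n : ℤ) + 1) - 2 = (n : ℤ) - 1 := by ring
        rw [e1, e2] at hrec hrecq
        push_cast [e1]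
        rw [hrec, hrecq]
        constructor
        · nlinarith
        constructor
        · linarith
        constructor
        · nlinarith
        constructor
        · nlinarith
        constructor
        · nlinarith
        · nlinarith
  have hk3 : ((k - 3 : ℕ) : ℤ) = (k : ℤ) - 3 := by
    push_cast [hk]; ring
  obtain ⟨j1, _, _, _, _, _⟩ := inv (k - 2) (le_of_eq hk2)
  obtain ⟨_, _, _, _, _, j6⟩ := inv (k - 3) (by omega)
  rw [hk2] at j1
  rw [hk3] at j6
  have e3 : (k : ℤ) - 2 - 1 = (k : ℤ) - 3 := by ring
  rw [e3] at j1
  -- trace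
  have htr : (Amat ((0 : ℤ) :: (0 : ℤ) :: l)).trace =
      -(p ((k : ℤ) - 2)) + q ((k : ℤ) - 3) := by
    rw [h2, Matrix.trace_fin_two_of]
  have hneg : (Amat ((0 : ℤ) :: (0 : ℤ) :: l)).trace < 0 := by
    rw [htr]; linarith
  exact ⟨h1, h2, hneg, by intro h; rw [h] at hneg; norm_num at hneg⟩
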